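/- Let H be a Hopf algebra over a commutative ring k and X a right-right Yetter–Drinfeld module over H. Then the square antipode σ : X → X defined by σ(x) = x₍₀₎ ◁ S(x₍₁₎) is bijective, with inverse σ⁻¹(x) = x₍₀₎ ◁ S⁻²(x₍₁₎) computed after applying the coaction, provided S is invertible; explicitly σ⁻¹ satisfies σ ∘ σ⁻¹ = σ⁻¹ ∘ σ = id, which follows from the identity x₍₀₎ ◁ (S(x₍₁₎) x₍₂₎) = x for all x ∈ X. -/

import Mathlib

/-!
The Yetter–Drinfeld condition gives `σ(y ◁ g) = y₍₀₎ ◁ S(y₍₁₎) S²(g)` and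
`σ⁻¹(y ◁ g) = y₍₀₎ ◁ S⁻²(y₍₁₎) S⁻²(g)`: in `(y₍₀₎ ◁ g₍₂₎) ◁ φ(S(g₍₁₎) y₍₁₎ g₍₃₎)`, with `φ = S`
respectively `φ = S⁻²`, the factor `g₍₂₎ S(g₍₃₎)`, respectively `g₍₂₎ S⁻¹(g₍₁₎)`, collapses to a
counit. Substituting
`σ⁻¹(x) = x₍₀₎ ◁ S⁻²(x₍₁₎)` and using coassociativity of the coaction,
`σ(σ⁻¹(x)) = x₍₀₎ ◁ S(x₍₁₎) x₍₂₎` and `σ⁻¹(σ(x)) = x₍₀₎ ◁ S⁻²(x₍₁₎) S⁻¹(x₍₂₎)`; both equal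
`x₍₀₎ ε(x₍₁₎) = x`, since `S(h₍₁₎) h₍₂₎ = ε(h) = S⁻²(h₍₁₎) S⁻¹(h₍₂₎)`.
-/

open TensorProduct

noncomputable section

universe u v₁ v₂

/-- A finite-sum representation of an element of a tensor product. -/
structure TRepr (R : Type u) [CommRing R] {M N : Type u} [AddCommGroup M] [Module R M]
    [AddCommGroup N] [Module R N] (t : M ⊗[R] N) where
  ι : Type u
  index : Finset ι
  fst : ι → M
  snd : ι → N
  eq : ∑ i ∈ index, fst i ⊗ₜ[R] snd i = t

/-- The old (Mathlib Dec 2024) `Coalgebra.Repr`, whose index type `ι` was a field. -/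
structure CoalgRepr (R : Type u) {A : Type*}
    [CommSemiring R] [AddCommMonoid A] [Module R A] [CoalgebraStruct R A] (a : A) where
  {ι : Type*}
  (index : Finset ι)
  (left : ι → A)
  (right : ι → A)
  (eq : ∑ i ∈ index, left i ⊗ₜ[R] right i = CoalgebraStruct.comul a)

section Defs

variable (R : Type u) [CommRing R] (H : Type u) [Ring H] [HopfAlgebra R H]

/-- The comultiplication of `H` as a linear map. -/
def Δm : H →ₗ[R] H ⊗[R] H := Coalgebra.comul

/-- The counit of `H`. -/
def εm : H →ₗ[R] R := Coalgebra.counit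

/-- The antipode of `H`. -/
def Sm : H →ₗ[R] H := HopfAlgebra.antipode (R := R) (A := H)

/-- The multiplication of `H` as a linear map on the tensor square. -/
def mm : H ⊗[R] H →ₗ[R] H := LinearMap.mul' R H

/-- A right-right Yetter–Drinfeld (crossed) module over the Hopf algebra `H`:
a right `H`-module and right `H`-comodule `X` satisfying the compatibility
`δ(x ◁ h) = (x₍₀₎ ◁ h₍₂₎) ⊗ S(h₍₁₎) x₍₁₎ h₍₃₎` (stated for every Sweedler
representation of the iterated comultiplication of `h` and of the coaction of `x`). -/
structure YD (X : Type u) [AddCommGroup X] [Module R X] where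
  act : X ⊗[R] H →ₗ[R] X
  coact : X →ₗ[R] X ⊗[R] H
  act_one : ∀ x : X, act (x ⊗ₜ[R] 1) = x
  act_mul : ∀ (x : X) (g h : H), act (x ⊗ₜ[R] (g * h)) = act (act (x ⊗ₜ[R] g) ⊗ₜ[R] h)
  coact_counit : ∀ x : X,
    (TensorProduct.rid R X) ((LinearMap.lTensor X (εm R H)) (coact x)) = x
  coact_coassoc : (TensorProduct.assoc R X H H).toLinearMap ∘ₗ
      LinearMap.rTensor H coact ∘ₗ coact = LinearMap.lTensor X (Δm R H) ∘ₗ coact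
  compat : ∀ (x : X) (h : H) (r : CoalgRepr.{u, u, v₁} R h)
      (r' : (i : r.ι) → CoalgRepr.{u, u, v₂} R (r.right i)) (c : TRepr R (coact x)),
      coact (act (x ⊗ₜ[R] h)) =
        ∑ i ∈ r.index, ∑ j ∈ (r' i).index, ∑ k ∈ c.index,
          act (c.fst k ⊗ₜ[R] (r' i).left j) ⊗ₜ[R]
            (Sm R H (r.left i) * c.snd k * (r' i).right j)

/-- A right `H`-module structure on `X` (action written as a linear map on `X ⊗ H`). -/
structure MAct (X : Type u) [AddCommGroup X] [Module R X] where
  act : X ⊗[R] H →ₗ[R] X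
  act_one : ∀ x : X, act (x ⊗ₜ[R] 1) = x
  act_mul : ∀ (x : X) (g h : H), act (x ⊗ₜ[R] (g * h)) = act (act (x ⊗ₜ[R] g) ⊗ₜ[R] h)

end Defs

section Maps

variable {R : Type u} [CommRing R] {H : Type u} [Ring H] [HopfAlgebra R H]
variable {X Y Z : Type u} [AddCommGroup X] [Module R X] [AddCommGroup Y] [Module R Y]
  [AddCommGroup Z] [Module R Z]

/-- The diagonal (tensor product) right action of `H` on `X ⊗ Y`:
`(x ⊗ y) ◁ h = (x ◁ h₍₁₎) ⊗ (y ◁ h₍₂₎)`. -/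
def dAct (aX : X ⊗[R] H →ₗ[R] X) (aY : Y ⊗[R] H →ₗ[R] Y) :
    (X ⊗[R] Y) ⊗[R] H →ₗ[R] X ⊗[R] Y :=
  TensorProduct.map aX aY ∘ₗ (TensorProduct.tensorTensorTensorComm R X Y H H).toLinearMap ∘ₗ
    LinearMap.lTensor (X ⊗[R] Y) (Δm R H)

/-- The codiagonal right coaction of `H` on `X ⊗ Y`:
`δ(x ⊗ y) = (x₍₀₎ ⊗ y₍₀₎) ⊗ y₍₁₎ x₍₁₎`. -/
def cCoact (cX : X →ₗ[R] X ⊗[R] H) (cY : Y →ₗ[R] Y ⊗[R] H) :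
    X ⊗[R] Y →ₗ[R] (X ⊗[R] Y) ⊗[R] H :=
  LinearMap.lTensor (X ⊗[R] Y) (mm R H ∘ₗ (TensorProduct.comm R H H).toLinearMap) ∘ₗ
    (TensorProduct.tensorTensorTensorComm R X H Y H).toLinearMap ∘ₗ TensorProduct.map cX cY

/-- The Yetter–Drinfeld braiding `Ψ(x ⊗ y) = y₍₀₎ ⊗ (x ◁ y₍₁₎)`. -/
def braid (aX : X ⊗[R] H →ₗ[R] X) (cY : Y →ₗ[R] Y ⊗[R] H) :
    X ⊗[R] Y →ₗ[R] Y ⊗[R] X :=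
  LinearMap.lTensor Y aX ∘ₗ (TensorProduct.assoc R Y X H).toLinearMap ∘ₗ
    LinearMap.rTensor H (TensorProduct.comm R X Y).toLinearMap ∘ₗ
    (TensorProduct.assoc R X Y H).symm.toLinearMap ∘ₗ LinearMap.lTensor X cY

/-- The candidate inverse braiding `Ψ⁻¹(y ⊗ x) = (x ◁ S'(y₍₁₎)) ⊗ y₍₀₎`
built from a map `S'` (intended to be the inverse of the antipode). -/
def braidInv (aX : X ⊗[R] H →ₗ[R] X) (cY : Y →ₗ[R] Y ⊗[R] H) (S' : H →ₗ[R] H) :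
    Y ⊗[R] X →ₗ[R] X ⊗[R] Y :=
  LinearMap.rTensor Y aX ∘ₗ (TensorProduct.comm R Y (X ⊗[R] H)).toLinearMap ∘ₗ
    LinearMap.lTensor Y (TensorProduct.comm R H X).toLinearMap ∘ₗ
    (TensorProduct.assoc R Y H X).toLinearMap ∘ₗ
    LinearMap.rTensor X (LinearMap.lTensor Y S') ∘ₗ LinearMap.rTensor X cY

/-- The square antipode `σ(x) = x₍₀₎ ◁ S(x₍₁₎)` of a crossed module. -/
def sqAnt (aX : X ⊗[R] H →ₗ[R] X) (cX : X →ₗ[R] X ⊗[R] H) : X →ₗ[R] X :=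
  aX ∘ₗ LinearMap.lTensor X (Sm R H) ∘ₗ cX

end Maps

open HopfAlgebra Coalgebra

namespace CoalgRepr

variable {R : Type*} [CommSemiring R] {A : Type*} [AddCommMonoid A] [Module R A]
  [CoalgebraStruct R A] {a : A}

def toRepr (r : CoalgRepr R a) : Coalgebra.Repr R a r.ι := ⟨r.index, r.left, r.right, r.eq⟩

/-- The compatibility axiom of `YD` only speaks about representations indexed in fixed
universes; reindexing by `Fin` provides them in any universe `w`. -/
def ofRepr.{w} {ι : Type*} (r : Coalgebra.Repr R a ι) : CoalgRepr.{_, _, w} R a where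
  ι := ULift (Fin r.index.card)
  index := .univ
  left i := r.left (r.index.equivFin.symm i.down)
  right i := r.right (r.index.equivFin.symm i.down)
  eq := by
    rw [← r.eq, ← Finset.sum_coe_sort r.index]
    exact Fintype.sum_equiv (Equiv.ulift.trans r.index.equivFin.symm) _ _ fun _ => rfl

end CoalgRepr

namespace Coalgebra

variable {R : Type*} [CommSemiring R] {A : Type*} [AddCommMonoid A] [Module R A] [Coalgebra R A]
  {a : A} {ι : Type*}

lemma sum_counit_right_smul (r : Repr R a ι) :
    ∑ i ∈ r.index, counit (R := R) (r.right i) • r.left i = a := by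
  simpa only [map_sum, _root_.TensorProduct.rid_tmul, one_smul]
    using congrArg (_root_.TensorProduct.rid R A) (sum_tmul_counit_eq r)

end Coalgebra

namespace HopfAlgebra

variable {R : Type*} [CommSemiring R] {H : Type*} [Semiring H] [HopfAlgebra R H]
  {a : H} {ι : Type*} {κ : ι → Type*}

lemma antipode_algebraMap (c : R) : antipode R (algebraMap R H c) = algebraMap R H c := by
  rw [Algebra.algebraMap_eq_smul_one, map_smul, antipode_one]

lemma sum_sum_mul_antipode_mul (f : H →ₗ[R] H) (r : Repr R a ι)
    (r' : ∀ i, Repr R (r.right i) (κ i)) :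
    ∑ i ∈ r.index, ∑ j ∈ (r' i).index,
      (r' i).left j * antipode R ((r' i).right j) * f (r.left i) = f a := by
  simp_rw [← Finset.sum_mul, sum_mul_antipode_eq_algebraMap_counit, ← Algebra.smul_def,
    ← map_smul, ← map_sum, sum_counit_right_smul]

section InverseAntipode

variable {S' : H →ₗ[R] H} (hS'S : ∀ h, S' (antipode R h) = h)
  (hSS' : ∀ h, antipode R (S' h) = h)
include hS'S hSS'

lemma inverse_antipode_mul (a b : H) : S' (a * b) = S' b * S' a := by
  rw [← hS'S (S' b * S' a), antipode_mul_antidistrib, hSS', hSS']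

omit hSS' in
lemma inverse_antipode_algebraMap (c : R) : S' (algebraMap R H c) = algebraMap R H c := by
  simpa only [antipode_algebraMap] using hS'S (algebraMap R H c)

lemma sum_right_mul_inverse_antipode_left (r : Repr R a ι) :
    ∑ i ∈ r.index, r.right i * S' (r.left i) = algebraMap R H (counit a) := by
  simpa [map_sum, inverse_antipode_mul hS'S hSS', hS'S, inverse_antipode_algebraMap hS'S]
    using congrArg S' (sum_mul_antipode_eq_algebraMap_counit r)

lemma sum_sum_mul_inverse_antipode_mul (f : H →ₗ[R] H) (r : Repr R a ι)
    (r' : ∀ i, Repr R (r.right i) (κ i)) :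
    ∑ i ∈ r.index, ∑ j ∈ (r' i).index, (r' i).left j * S' (r.left i) * f ((r' i).right j)
      = f a := by
  let Ψ : H ⊗[R] (H ⊗[R] H) →ₗ[R] H := LinearMap.mul' R H ∘ₗ
    TensorProduct.map (LinearMap.mul' R H ∘ₗ (TensorProduct.comm R H H).toLinearMap ∘ₗ
      S'.rTensor H) f ∘ₗ (TensorProduct.assoc R H H H).symm.toLinearMap
  have hcoassoc := congr(Ψ $(sum_tmul_tmul_eq r (fun i => ℛ R (r.left i)) r'))
  simp only [map_sum, Ψ, LinearMap.comp_apply, LinearEquiv.coe_coe,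
    TensorProduct.assoc_symm_tmul, TensorProduct.map_tmul, LinearMap.rTensor_tmul,
    TensorProduct.comm_tmul, LinearMap.mul'_apply] at hcoassoc
  rw [← hcoassoc]
  simp_rw [← Finset.sum_mul, sum_right_mul_inverse_antipode_left hS'S hSS', ← Algebra.smul_def,
    ← map_smul, ← map_sum, sum_counit_smul]

omit hS'S in
lemma mul'_comp_map_antipode_comp_lTensor_inverse_antipode_comp_comul :
    LinearMap.mul' R H ∘ₗ TensorProduct.map (antipode R) (antipode R ∘ₗ antipode R) ∘ₗ
      (S' ∘ₗ S').lTensor H ∘ₗ comul = Algebra.linearMap R H ∘ₗ counit := by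
  ext h
  simpa [map_sum, hSS', ← (ℛ R h).eq] using sum_antipode_mul_eq_algebraMap_counit (ℛ R h)

lemma mul'_comp_map_inverse_antipode_comp_lTensor_antipode_comp_comul :
    LinearMap.mul' R H ∘ₗ TensorProduct.map (S' ∘ₗ S') (S' ∘ₗ S') ∘ₗ
      (antipode R).lTensor H ∘ₗ comul = Algebra.linearMap R H ∘ₗ counit := by
  ext h
  simpa [map_sum, inverse_antipode_mul hS'S hSS', inverse_antipode_algebraMap hS'S, hS'S,
    ← (ℛ R h).eq] using congrArg S' (sum_right_mul_inverse_antipode_left hS'S hSS' (ℛ R h))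

end InverseAntipode

end HopfAlgebra

namespace YD

variable {R : Type u} [CommRing R] {H : Type u} [Ring H] [HopfAlgebra R H]
  {X : Type u} [AddCommGroup X] [Module R X] (T : YD.{u, v₁, v₂} R H X)

lemma act_algebraMap (x : X) (c : R) : T.act (x ⊗ₜ[R] algebraMap R H c) = c • x := by
  rw [Algebra.algebraMap_eq_smul_one, tmul_smul, map_smul, T.act_one]

/-- `y ⊗ g ↦ y₍₀₎ ◁ f (y₍₁₎ ⊗ g)`. -/
def actAfterCoact (f : H ⊗[R] H →ₗ[R] H) : X ⊗[R] H →ₗ[R] X :=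
  T.act ∘ₗ f.lTensor X ∘ₗ (TensorProduct.assoc R X H H).toLinearMap ∘ₗ T.coact.rTensor H

lemma actAfterCoact_comp_lTensor_comp_coact {f : H ⊗[R] H →ₗ[R] H} {k : H →ₗ[R] H}
    (hfk : f ∘ₗ k.lTensor H ∘ₗ comul = Algebra.linearMap R H ∘ₗ counit) :
    T.actAfterCoact f ∘ₗ k.lTensor X ∘ₗ T.coact = LinearMap.id := by
  have hnat : (TensorProduct.assoc R X H H).toLinearMap ∘ₗ T.coact.rTensor H ∘ₗ k.lTensor X
      = (k.lTensor H).lTensor X ∘ₗ (TensorProduct.assoc R X H H).toLinearMap ∘ₗ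
        T.coact.rTensor H := by
    rw [LinearMap.rTensor_comp_lTensor, ← LinearMap.lTensor_comp_rTensor,
      LinearMap.lTensor_tensor]
    ext x h
    simp
  have hcounit : T.act ∘ₗ (Algebra.linearMap R H ∘ₗ counit).lTensor X ∘ₗ T.coact
      = LinearMap.id := by
    have hact : T.act ∘ₗ (Algebra.linearMap R H).lTensor X
        = (TensorProduct.rid R X).toLinearMap := by
      ext x
      simpa using T.act_one x
    rw [LinearMap.lTensor_comp, ← LinearMap.comp_assoc, ← LinearMap.comp_assoc, hact]
    exact LinearMap.ext T.coact_counit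
  calc T.actAfterCoact f ∘ₗ k.lTensor X ∘ₗ T.coact
      = T.act ∘ₗ f.lTensor X ∘ₗ (k.lTensor H).lTensor X ∘ₗ
          ((TensorProduct.assoc R X H H).toLinearMap ∘ₗ T.coact.rTensor H ∘ₗ T.coact) := by
        simpa only [actAfterCoact, LinearMap.comp_assoc]
          using congrArg (fun g => T.act ∘ₗ f.lTensor X ∘ₗ g ∘ₗ T.coact) hnat
    _ = T.act ∘ₗ (f ∘ₗ k.lTensor H ∘ₗ comul).lTensor X ∘ₗ T.coact := by
        rw [T.coact_coassoc]
        simp only [Δm, LinearMap.lTensor_comp, LinearMap.comp_assoc]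
    _ = LinearMap.id := by rw [hfk, hcounit]

/-- By the compatibility condition, `(y ◁ g)₍₀₎ ◁ φ((y ◁ g)₍₁₎) = y₍₀₎ ◁ f(y₍₁₎ ⊗ g)` as soon
as `(x ◁ g₍₂₎) ◁ φ(S(g₍₁₎) z g₍₃₎) = x ◁ f(z ⊗ g)` for all `x` and `z`. -/
lemma act_lTensor_coact_comp_act_eq {φ : H →ₗ[R] H} {f : H ⊗[R] H →ₗ[R] H}
    (hφf : ∀ (x : X) (z g : H) (r : CoalgRepr.{u, u, v₁} R g)
      (r' : ∀ i, CoalgRepr.{u, u, v₂} R (r.right i)),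
      ∑ i ∈ r.index, ∑ j ∈ (r' i).index,
        T.act (T.act (x ⊗ₜ[R] (r' i).left j) ⊗ₜ[R]
          φ (antipode R (r.left i) * z * (r' i).right j))
        = T.act (x ⊗ₜ[R] f (z ⊗ₜ[R] g))) :
    (T.act ∘ₗ φ.lTensor X ∘ₗ T.coact) ∘ₗ T.act = T.actAfterCoact f := by
  refine TensorProduct.ext' fun y g => ?_
  obtain ⟨s, hs⟩ := TensorProduct.exists_finset (R := R) (T.coact y)
  let r : CoalgRepr.{u, u, v₁} R g := .ofRepr (ℛ R g)
  let r' i : CoalgRepr.{u, u, v₂} R (r.right i) := .ofRepr (ℛ R (r.right i))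
  simp only [actAfterCoact, LinearMap.comp_apply,
    T.compat y g r r' ⟨X × H, s, Prod.fst, Prod.snd, hs.symm⟩, LinearMap.rTensor_tmul, hs,
    map_sum, sum_tmul, LinearMap.lTensor_tmul, LinearEquiv.coe_coe, TensorProduct.assoc_tmul,
    Sm]
  rw [Finset.sum_congr rfl fun (p : X × H) _ => (hφf p.1 p.2 g r r').symm, Finset.sum_comm]
  exact Finset.sum_congr rfl fun i _ => Finset.sum_comm

lemma sqAnt_comp_act : sqAnt T.act T.coact ∘ₗ T.act = T.actAfterCoact
    (LinearMap.mul' R H ∘ₗ TensorProduct.map (antipode R) (antipode R ∘ₗ antipode R)) :=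
  T.act_lTensor_coact_comp_act_eq fun x z g r r' => by
    have := sum_sum_mul_antipode_mul (LinearMap.mulLeft R (antipode R z) ∘ₗ antipode R ∘ₗ
      antipode R) r.toRepr fun i => (r' i).toRepr
    simp only [LinearMap.comp_apply, LinearMap.mulLeft_apply] at this
    simp only [LinearMap.comp_apply, TensorProduct.map_tmul, LinearMap.mul'_apply, ← this,
      tmul_sum, map_sum, ← T.act_mul, Sm, antipode_mul_antidistrib, mul_assoc]
    rfl

lemma act_lTensor_inverse_antipode_coact_comp_act {S' : H →ₗ[R] H}
    (hS'S : ∀ h, S' (antipode R h) = h) (hSS' : ∀ h, antipode R (S' h) = h) :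
    (T.act ∘ₗ (S' ∘ₗ S').lTensor X ∘ₗ T.coact) ∘ₗ T.act
      = T.actAfterCoact (LinearMap.mul' R H ∘ₗ TensorProduct.map (S' ∘ₗ S') (S' ∘ₗ S')) :=
  T.act_lTensor_coact_comp_act_eq fun x z g r r' => by
    have := sum_sum_mul_inverse_antipode_mul hS'S hSS'
      (LinearMap.mulLeft R (S' (S' z)) ∘ₗ S' ∘ₗ S') r.toRepr fun i => (r' i).toRepr
    simp only [LinearMap.comp_apply, LinearMap.mulLeft_apply] at this
    simp only [LinearMap.comp_apply, TensorProduct.map_tmul, LinearMap.mul'_apply, ← this,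
      tmul_sum, map_sum, ← T.act_mul, inverse_antipode_mul hS'S hSS', hS'S, mul_assoc]
    rfl

lemma sum_act_antipode_mul (x : X) (c : TRepr R (T.coact x))
    (rc : ∀ i, CoalgRepr R (c.snd i)) :
    ∑ i ∈ c.index, ∑ j ∈ (rc i).index,
      T.act (c.fst i ⊗ₜ[R] (antipode R ((rc i).left j) * (rc i).right j)) = x := by
  have hcollapse i : ∑ j ∈ (rc i).index,
      T.act (c.fst i ⊗ₜ[R] (antipode R ((rc i).left j) * (rc i).right j))
        = counit (R := R) (c.snd i) • c.fst i := by
    rw [← T.act_algebraMap, ← sum_antipode_mul_eq_algebraMap_counit (rc i).toRepr, tmul_sum,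
      map_sum]
    rfl
  rw [Finset.sum_congr rfl fun i _ => hcollapse i]
  conv_rhs => rw [← T.coact_counit x, ← c.eq]
  simp [εm, map_sum]

end YD

/-- For a Yetter–Drinfeld module `X` over a Hopf algebra `H` with invertible antipode `S`
(inverse `S'`), the square antipode `σ(x) = x₍₀₎ ◁ S(x₍₁₎)` is bijective, with inverse
`σ⁻¹(x) = x₍₀₎ ◁ S⁻²(x₍₁₎)`; this follows from the identity `x₍₀₎ ◁ (S(x₍₁₎) x₍₂₎) = x`. -/
theorem stmt4 (R : Type u) [CommRing R] (H : Type u) [Ring H] [HopfAlgebra R H]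
    (X : Type u) [AddCommGroup X] [Module R X] (T : YD R H X)
    (S' : H →ₗ[R] H) (hS'1 : ∀ h, S' (Sm R H h) = h) (hS'2 : ∀ h, Sm R H (S' h) = h) :
    let σ : X →ₗ[R] X := sqAnt T.act T.coact
    let σinv : X →ₗ[R] X := T.act ∘ₗ LinearMap.lTensor X (S' ∘ₗ S') ∘ₗ T.coact
    σ ∘ₗ σinv = LinearMap.id ∧ σinv ∘ₗ σ = LinearMap.id ∧ Function.Bijective σ ∧
    (∀ (x : X) (c : TRepr R (T.coact x)) (rc : (i : c.ι) → CoalgRepr R (c.snd i)),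
      ∑ i ∈ c.index, ∑ j ∈ (rc i).index,
        T.act (c.fst i ⊗ₜ[R] (Sm R H ((rc i).left j) * (rc i).right j)) = x) := by
  intro σ σinv
  have hS'S : ∀ h, S' (antipode R h) = h := hS'1
  have hSS' : ∀ h, antipode R (S' h) = h := hS'2
  have hσ : σ = T.act ∘ₗ (antipode R).lTensor X ∘ₗ T.coact := rfl
  have hσσinv : σ ∘ₗ σinv = LinearMap.id := by
    rw [← LinearMap.comp_assoc, T.sqAnt_comp_act]
    exact T.actAfterCoact_comp_lTensor_comp_coact
      (mul'_comp_map_antipode_comp_lTensor_inverse_antipode_comp_comul hSS')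
  have hσinvσ : σinv ∘ₗ σ = LinearMap.id := by
    rw [hσ, ← LinearMap.comp_assoc, T.act_lTensor_inverse_antipode_coact_comp_act hS'S hSS']
    exact T.actAfterCoact_comp_lTensor_comp_coact
      (mul'_comp_map_inverse_antipode_comp_lTensor_antipode_comp_comul hS'S hSS')
  exact ⟨hσσinv, hσinvσ, Function.bijective_iff_has_inverse.mpr
      ⟨σinv, LinearMap.congr_fun hσinvσ, LinearMap.congr_fun hσσinv⟩,
    T.sum_act_antipode_mul⟩
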